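/- Let θ be a real number, and for η ∈ ℝ let r_η denote the 2×2 rotation matrix [[cos η, -sin η],[sin η, cos η]]. Let q = 2k-1 ≡ 1 (mod 4) be an odd prime power, χ the quadratic character on GF(q), and b ∈ GF(q) nonzero. Then the sum over a ∈ GF(q) \ {0,-b} of r_{θ(χ(a)-χ(a+b))} equals (k-2 + (k-1)·cos(2θ))·I₂. -/

import Mathlib

/-!
Since `rot η = cos η • 1 + sin η • J`, the sum is `(∑ cos) • 1` as soon as the sine terms cancel;
they do, because `a ↦ -b - a` permutes the index set and, as `χ(-1) = 1` for `q ≡ 1 (mod 4)`,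
swaps `χ(a)` and `χ(a + b)`. Each cosine is `1` or `cos 2θ` according as `χ(a)χ(a + b)` is
`1` or `-1`, and the Jacobsthal sum `∑ χ(a)χ(a + b) = -1` (a Jacobi sum `J(χ, χ⁻¹)`) splits the
`q - 2` indices into `k - 2` of the first kind and `k - 1` of the second.
-/

open Finset Matrix

/-- The 2×2 rotation matrix by angle `η`. -/
noncomputable def rot (η : ℝ) : Matrix (Fin 2) (Fin 2) ℝ :=
  !![Real.cos η, -Real.sin η; Real.sin η, Real.cos η]

lemma rot_eq_cos_smul_one_add_sin_smul (η : ℝ) :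
    rot η = Real.cos η • 1 + Real.sin η • !![0, -1; 1, 0] := by
  ext i j
  fin_cases i <;> fin_cases j <;> simp [rot]

lemma sum_rot_of_involution {ι : Type*} (s : Finset ι) (f : ι → ℝ) (σ : ι → ι)
    (hσ : ∀ a ∈ s, σ a ∈ s) (hσσ : ∀ a ∈ s, σ (σ a) = a) (hf : ∀ a ∈ s, f (σ a) = -f a) :
    ∑ a ∈ s, rot (f a) = (∑ a ∈ s, Real.cos (f a)) • 1 := by
  have hsin : ∑ a ∈ s, Real.sin (f a) = 0 := by
    have h : ∑ a ∈ s, Real.sin (f (σ a)) = ∑ a ∈ s, Real.sin (f a) :=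
      sum_nbij' σ σ hσ hσ hσσ hσσ fun _ _ => rfl
    rw [sum_congr rfl fun a ha => by rw [hf a ha, Real.sin_neg], sum_neg_distrib] at h
    linarith
  simp only [rot_eq_cos_smul_one_add_sin_smul, sum_add_distrib, ← sum_smul, hsin, zero_smul,
    add_zero]

lemma cos_mul_intCast_sub {x y : ℤ} (hx : x = 1 ∨ x = -1) (hy : y = 1 ∨ y = -1) (θ : ℝ) :
    Real.cos (θ * ((x - y : ℤ) : ℝ)) =
      (1 + ((x * y : ℤ) : ℝ)) / 2 + (1 - ((x * y : ℤ) : ℝ)) / 2 * Real.cos (2 * θ) := by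
  rcases hx with rfl | rfl <;> rcases hy with rfl | rfl <;> norm_num [mul_comm θ]

lemma sum_cos_mul_intCast_sub {ι : Type*} (s : Finset ι) {x y : ι → ℤ}
    (hx : ∀ i ∈ s, x i = 1 ∨ x i = -1) (hy : ∀ i ∈ s, y i = 1 ∨ y i = -1) (θ : ℝ) :
    ∑ i ∈ s, Real.cos (θ * ((x i - y i : ℤ) : ℝ)) =
      (#s + ∑ i ∈ s, ((x i * y i : ℤ) : ℝ)) / 2 +
        (#s - ∑ i ∈ s, ((x i * y i : ℤ) : ℝ)) / 2 * Real.cos (2 * θ) := by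
  rw [sum_congr rfl fun i hi => cos_mul_intCast_sub (hx i hi) (hy i hi) θ]
  simp only [sum_add_distrib, ← sum_div, ← sum_mul, sum_sub_distrib, sum_const, nsmul_eq_mul,
    mul_one]

lemma card_filter_ne_and_ne {α : Type*} [Fintype α] [DecidableEq α] {x y : α} (h : x ≠ y) :
    #{a | a ≠ x ∧ a ≠ y} = Fintype.card α - 2 := by
  have : ({a | a ≠ x ∧ a ≠ y} : Finset α) = univ \ {x, y} := by
    ext a
    simp
  rw [this, card_sdiff_of_subset (subset_univ _), card_pair h, card_univ]

lemma MulChar.sum_mul_inv_add {F R : Type*} [Field F] [Fintype F] [CommRing R] [IsDomain R]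
    {χ : MulChar F R} (hχ : χ ≠ 1) {b : F} (hb : b ≠ 0) :
    ∑ a, χ a * χ⁻¹ (a + b) = -1 := by
  have hχb : χ b * χ⁻¹ b = 1 := by
    rw [MulChar.inv_apply', ← map_mul, mul_inv_cancel₀ hb, map_one]
  have hχ1 : χ (-1) * χ (-1) = 1 := by
    rw [← map_mul, neg_one_mul, neg_neg, map_one]
  calc ∑ a, χ a * χ⁻¹ (a + b) = ∑ x, χ (-b * x) * χ⁻¹ (-b * x + b) :=
        (Equiv.sum_comp (Equiv.mulLeft₀ (-b) (neg_ne_zero.mpr hb)) _).symm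
    _ = ∑ x, χ (-1) * (χ b * χ⁻¹ b) * (χ x * χ⁻¹ (1 - x)) := by
        refine sum_congr rfl fun x _ => ?_
        rw [show -b * x + b = b * (1 - x) by ring, show -b * x = -1 * b * x by ring]
        simp only [map_mul]
        ring
    _ = χ (-1) * jacobiSum χ χ⁻¹ := by rw [hχb, mul_one, jacobiSum, mul_sum]
    _ = -1 := by rw [jacobiSum_nontrivial_inv hχ, mul_neg, hχ1]

section QuadraticChar

variable {F : Type*} [Field F] [Fintype F] [DecidableEq F]

lemma quadraticChar_sum_mul_add (hF : ringChar F ≠ 2) {b : F} (hb : b ≠ 0) :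
    ∑ a, quadraticChar F a * quadraticChar F (a + b) = -1 := by
  simpa only [(quadraticChar_isQuadratic F).inv] using
    MulChar.sum_mul_inv_add (quadraticChar_ne_one hF) hb

lemma quadraticChar_sum_filter_mul_add (hF : ringChar F ≠ 2) {b : F} (hb : b ≠ 0) :
    ∑ a ∈ univ.filter (fun a : F => a ≠ 0 ∧ a ≠ -b),
      quadraticChar F a * quadraticChar F (a + b) = -1 := by
  rw [sum_filter_of_ne fun a _ h => ?_, quadraticChar_sum_mul_add hF hb]
  obtain ⟨ha, hab⟩ := mul_ne_zero_iff.mp h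
  exact ⟨mt quadraticChar_eq_zero_iff.mpr ha,
    fun h => hab (quadraticChar_eq_zero_iff.mpr (add_eq_zero_iff_eq_neg.mpr h))⟩

lemma quadraticChar_neg_of_card_mod_four (hF : ringChar F ≠ 2)
    (hmod : Fintype.card F % 4 = 1) (x : F) :
    quadraticChar F (-x) = quadraticChar F x := by
  rw [neg_eq_neg_one_mul, map_mul, quadraticChar_neg_one hF, ZMod.χ₄_nat_one_mod_four hmod,
    one_mul]

end QuadraticChar

theorem rotation_sum_general (F : Type*) [Field F] [Fintype F] [DecidableEq F]
    (hmod : Fintype.card F % 4 = 1)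
    (k : ℕ) (hk : Fintype.card F = 2 * k - 1)
    (θ : ℝ) (b : F) (hb : b ≠ 0) :
    ∑ a ∈ univ.filter (fun a : F => a ≠ 0 ∧ a ≠ -b),
        rot (θ * ((quadraticChar F a - quadraticChar F (a + b) : ℤ) : ℝ)) =
      ((k : ℝ) - 2 + ((k : ℝ) - 1) * Real.cos (2 * θ)) • 1 := by
  have hF : ringChar F ≠ 2 := fun h => by
    have := FiniteField.even_card_iff_char_two.mp h
    omega
  have hχneg := quadraticChar_neg_of_card_mod_four hF hmod
  set s := univ.filter (fun a : F => a ≠ 0 ∧ a ≠ -b)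
  have mem_s {a : F} : a ∈ s ↔ a ≠ 0 ∧ a + b ≠ 0 := by
    simp [s, add_eq_zero_iff_eq_neg]
  have hcard : (#s : ℝ) = 2 * k - 3 := by
    have := Fintype.one_lt_card (α := F)
    rw [card_filter_ne_and_ne (neg_ne_zero.mpr hb).symm, Nat.cast_sub (by omega), hk,
      Nat.cast_sub (by omega)]
    push_cast
    ring
  have hprod : ∑ a ∈ s, ((quadraticChar F a * quadraticChar F (a + b) : ℤ) : ℝ) = -1 := by
    rw [← Int.cast_sum, quadraticChar_sum_filter_mul_add hF hb, Int.cast_neg, Int.cast_one]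
  rw [sum_rot_of_involution s _ (fun a => -b - a)
      (fun a ha => by grind)
      (fun a _ => by ring)
      (fun a _ => by
        rw [show -b - a = -(a + b) by ring, show -(a + b) + b = -a by ring, hχneg, hχneg]
        push_cast
        ring),
    sum_cos_mul_intCast_sub s (fun a ha => quadraticChar_dichotomy (mem_s.mp ha).1)
      (fun a ha => quadraticChar_dichotomy (mem_s.mp ha).2), hprod, hcard]
  congr 1
  ring

/-- For `q = 2k-1 ≡ 1 (mod 4)` an odd prime power, `b ≠ 0` in `GF(q)`
and any real `θ`, `∑_{a ≠ 0, -b} r_{θ(χ(a)-χ(a+b))} = (k-2 + (k-1)·cos 2θ)·I₂`. -/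
theorem rotation_sum (F : Type*) [Field F] [Fintype F] [DecidableEq F]
    (p : ℕ) (α : ℕ) (hp : p.Prime) (hodd : p ≠ 2)
    (hcard : Fintype.card F = p ^ α) (hmod : Fintype.card F % 4 = 1)
    (k : ℕ) (hk : Fintype.card F = 2 * k - 1) (hk2 : 2 ≤ k)
    (θ : ℝ) (b : F) (hb : b ≠ 0) :
    ∑ a ∈ univ.filter (fun a : F => a ≠ 0 ∧ a ≠ -b),
        rot (θ * ((quadraticChar F a - quadraticChar F (a + b) : ℤ) : ℝ)) =
      ((k : ℝ) - 2 + ((k : ℝ) - 1) * Real.cos (2 * θ)) • 1 :=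
  rotation_sum_general F hmod k hk θ b hb
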